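/- arXiv:0808.0163 — 5 statements merged into one kernel-verified Lean document; each statement's English description precedes it below -/
import Mathlib

section
/- Let A be a real symmetric n×n matrix with λ_max(A) < u, let δ_U > 0, and let v ∈ R^n. Define U_A(v) = v^T((u+δ_U)I - A)^{-2} v / (Φ^u(A) - Φ^{u+δ_U}(A)) + v^T((u+δ_U)I - A)^{-1} v. If t > 0 satisfies 1/t ≥ U_A(v), then Φ^{u+δ_U}(A + t v v^T) ≤ Φ^u(A) and λ_max(A + t v v^T) < u + δ_U. -/
/-!
Put `M = (u + δU)I - A` and `P = M⁻¹`. By the Sherman–Morrison formula, as long as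
`t vᵀPv < 1`,
`(M - t vvᵀ)⁻¹ = P + t / (1 - t vᵀPv) · (Pv)(Pv)ᵀ`,
a positive definite matrix plus a positive semidefinite one; hence `M - t vvᵀ` is positive
definite and the potential grows by exactly `t vᵀP²v / (1 - t vᵀPv)`. By the resolvent identity
`(uI - A)⁻¹ - P = δU (uI - A)⁻¹P` the gap `Φ^u(A) - Φ^{u+δU}(A)` is positive, and the hypothesis
`1/t ≥ U_A(v)` is a rearrangement of "growth ≤ gap".
-/

open Matrix

/-- The upper potential `Φ^u(A) = Tr((uI - A)⁻¹)`. -/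
noncomputable def upperPotential {n : ℕ} (u : ℝ) (A : Matrix (Fin n) (Fin n) ℝ) : ℝ :=
  ((u • (1 : Matrix (Fin n) (Fin n) ℝ) - A)⁻¹).trace

namespace Matrix

variable {ι K : Type*} [DecidableEq ι]

theorem PosDef.add_smul_one {M : Matrix ι ι ℝ} (hM : M.PosDef) {δ : ℝ} (hδ : 0 ≤ δ) :
    (M + δ • 1).PosDef :=
  hM.add_posSemidef (PosSemidef.one.smul hδ)

variable [Fintype ι]

section Field

variable [Field K]

theorem sub_smul_vecMulVec_mul_eq_one {M P : Matrix ι ι K} (hMP : M * P = 1) (v : ι → K)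
    {t : K} (hc : 1 - t * (v ⬝ᵥ P *ᵥ v) ≠ 0) :
    (M - t • vecMulVec v v) *
      (P + (t / (1 - t * (v ⬝ᵥ P *ᵥ v))) • vecMulVec (P *ᵥ v) (v ᵥ* P)) = 1 := by
  set c := 1 - t * (v ⬝ᵥ P *ᵥ v)
  have hMPv : M * vecMulVec (P *ᵥ v) (v ᵥ* P) = vecMulVec v (v ᵥ* P) := by
    rw [mul_vecMulVec, mulVec_mulVec, hMP, one_mulVec]
  have hvvPv : vecMulVec v v * vecMulVec (P *ᵥ v) (v ᵥ* P)
      = (v ⬝ᵥ P *ᵥ v) • vecMulVec v (v ᵥ* P) := by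
    rw [vecMulVec_mul_vecMulVec, vecMulVec_smul]
  have hcoeff : t / c - t - t / c * (t * (v ⬝ᵥ P *ᵥ v)) = 0 := by
    field_simp
    ring
  calc (M - t • vecMulVec v v) * (P + (t / c) • vecMulVec (P *ᵥ v) (v ᵥ* P))
      = 1 + (t / c - t - t / c * (t * (v ⬝ᵥ P *ᵥ v))) • vecMulVec v (v ᵥ* P) := by
        simp only [sub_mul, mul_add, Matrix.mul_smul, Matrix.smul_mul, hMP, hMPv,
          vecMulVec_mul, hvvPv, smul_smul, sub_smul]
        abel
    _ = 1 := by rw [hcoeff, zero_smul, add_zero]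

theorem inv_sub_smul_vecMulVec {M : Matrix ι ι K} (hM : IsUnit M) (v : ι → K) {t : K}
    (hc : 1 - t * (v ⬝ᵥ M⁻¹ *ᵥ v) ≠ 0) :
    (M - t • vecMulVec v v)⁻¹ =
      M⁻¹ + (t / (1 - t * (v ⬝ᵥ M⁻¹ *ᵥ v))) • vecMulVec (M⁻¹ *ᵥ v) (v ᵥ* M⁻¹) :=
  inv_eq_right_inv <|
    sub_smul_vecMulVec_mul_eq_one (mul_nonsing_inv M ((isUnit_iff_isUnit_det M).mp hM)) v hc

theorem trace_inv_sub_smul_vecMulVec {M : Matrix ι ι K} (hM : IsUnit M) (v : ι → K) {t : K}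
    (hc : 1 - t * (v ⬝ᵥ M⁻¹ *ᵥ v) ≠ 0) :
    (M - t • vecMulVec v v)⁻¹.trace =
      M⁻¹.trace + t / (1 - t * (v ⬝ᵥ M⁻¹ *ᵥ v)) * (v ⬝ᵥ (M⁻¹ * M⁻¹) *ᵥ v) := by
  rw [inv_sub_smul_vecMulVec hM v hc, trace_add, trace_smul, trace_vecMulVec, smul_eq_mul,
    dotProduct_comm (M⁻¹ *ᵥ v), ← dotProduct_mulVec, mulVec_mulVec]

theorem inv_sub_inv_add_smul_one {M : Matrix ι ι K} (hM : IsUnit M) {δ : K}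
    (hMδ : IsUnit (M + δ • 1)) :
    M⁻¹ - (M + δ • 1)⁻¹ = δ • ((M + δ • 1) * M)⁻¹ := by
  have hdet := (isUnit_iff_isUnit_det M).mp hM
  have hdetδ := (isUnit_iff_isUnit_det _).mp hMδ
  calc M⁻¹ - (M + δ • 1)⁻¹ = M⁻¹ * ((M + δ • 1) - M) * (M + δ • 1)⁻¹ := by
        rw [mul_sub, sub_mul, Matrix.mul_assoc, mul_nonsing_inv _ hdetδ, mul_one,
          nonsing_inv_mul _ hdet, one_mul]
    _ = δ • ((M + δ • 1) * M)⁻¹ := by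
        rw [add_sub_cancel_left, Matrix.mul_smul, mul_one, Matrix.smul_mul, mul_inv_rev]

end Field

namespace PosDef

variable {M : Matrix ι ι ℝ}

theorem add_smul_one_mul_self (hM : M.PosDef) {δ : ℝ} (hδ : 0 ≤ δ) :
    ((M + δ • 1) * M).PosDef := by
  have hMM : (Mᴴ * M).PosDef :=
    conjTranspose_mul_self M (mulVec_injective_iff_isUnit.mpr hM.isUnit)
  rw [hM.isHermitian.eq] at hMM
  rw [add_mul, Matrix.smul_mul, one_mul]
  exact hMM.add_posSemidef (hM.posSemidef.smul hδ)

theorem trace_inv_sub_trace_inv_add_smul_one (hM : M.PosDef) {δ : ℝ} (hδ : 0 ≤ δ) :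
    M⁻¹.trace - (M + δ • 1)⁻¹.trace = δ * ((M + δ • 1) * M)⁻¹.trace := by
  rw [← trace_sub, inv_sub_inv_add_smul_one hM.isUnit (hM.add_smul_one hδ).isUnit, trace_smul,
    smul_eq_mul]

theorem trace_inv_add_smul_one_le (hM : M.PosDef) {δ : ℝ} (hδ : 0 ≤ δ) :
    (M + δ • 1)⁻¹.trace ≤ M⁻¹.trace := by
  have := hM.trace_inv_sub_trace_inv_add_smul_one hδ
  have := mul_nonneg hδ (hM.add_smul_one_mul_self hδ).inv.posSemidef.trace_nonneg
  linarith

theorem trace_inv_add_smul_one_lt [Nonempty ι] (hM : M.PosDef) {δ : ℝ} (hδ : 0 < δ) :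
    (M + δ • 1)⁻¹.trace < M⁻¹.trace := by
  have := hM.trace_inv_sub_trace_inv_add_smul_one hδ.le
  have := mul_pos hδ (hM.add_smul_one_mul_self hδ.le).inv.trace_pos
  linarith

theorem vecMul_inv (hM : M.PosDef) (v : ι → ℝ) : v ᵥ* M⁻¹ = M⁻¹ *ᵥ v := by
  rw [← mulVec_transpose, (isHermitian_iff_isSymm.mp hM.inv.isHermitian).eq]

theorem sub_smul_vecMulVec (hM : M.PosDef) (v : ι → ℝ) {t : ℝ} (ht : 0 ≤ t)
    (hts : t * (v ⬝ᵥ M⁻¹ *ᵥ v) < 1) : (M - t • vecMulVec v v).PosDef := by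
  have hc : 0 < 1 - t * (v ⬝ᵥ M⁻¹ *ᵥ v) := sub_pos.2 hts
  have hB := hM.inv.add_posSemidef
    ((posSemidef_vecMulVec_self_star (M⁻¹ *ᵥ v)).smul (div_nonneg ht hc.le))
  rw [star_trivial] at hB
  have hMB := sub_smul_vecMulVec_mul_eq_one
    (mul_nonsing_inv M ((isUnit_iff_isUnit_det M).mp hM.isUnit)) v hc.ne'
  rw [← inv_eq_left_inv hMB, hM.vecMul_inv]
  exact hB.inv

theorem dotProduct_mul_self_inv_mulVec_pos (hM : M.PosDef) {v : ι → ℝ} (hv : v ≠ 0) :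
    0 < v ⬝ᵥ (M⁻¹ * M⁻¹) *ᵥ v := by
  have hP := hM.inv
  have hPP : (M⁻¹ᴴ * M⁻¹).PosDef :=
    conjTranspose_mul_self _ (mulVec_injective_iff_isUnit.mpr hP.isUnit)
  rw [hP.isHermitian.eq] at hPP
  simpa only [star_trivial] using hPP.dotProduct_mulVec_pos hv

end PosDef

end Matrix

theorem upper_barrier_shift_general {n : ℕ} (A : Matrix (Fin n) (Fin n) ℝ)
    (u δU : ℝ) (hδ : 0 < δU)
    (hu : (u • (1 : Matrix (Fin n) (Fin n) ℝ) - A).PosDef)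
    (v : Fin n → ℝ) (t : ℝ) (ht : 0 < t)
    (hUt : 1 / t ≥
      (v ⬝ᵥ (((u + δU) • (1 : Matrix (Fin n) (Fin n) ℝ) - A)⁻¹ *
          ((u + δU) • (1 : Matrix (Fin n) (Fin n) ℝ) - A)⁻¹).mulVec v) /
        (upperPotential u A - upperPotential (u + δU) A)
      + v ⬝ᵥ (((u + δU) • (1 : Matrix (Fin n) (Fin n) ℝ) - A)⁻¹).mulVec v) :
    upperPotential (u + δU) (A + t • vecMulVec v v) ≤ upperPotential u A ∧
    ((u + δU) • (1 : Matrix (Fin n) (Fin n) ℝ) - (A + t • vecMulVec v v)).PosDef := by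
  set M := u • (1 : Matrix (Fin n) (Fin n) ℝ) - A with hM
  have hshift : (u + δU) • (1 : Matrix (Fin n) (Fin n) ℝ) - A = M + δU • 1 := by
    rw [hM, add_smul]; abel
  have hMδ := hu.add_smul_one hδ.le
  simp only [upperPotential, hshift, ← sub_sub] at hUt ⊢
  rcases eq_or_ne v 0 with rfl | hv
  · simpa using ⟨hu.trace_inv_add_smul_one_le hδ.le, hMδ⟩
  have : Nonempty (Fin n) := (Function.ne_iff.mp hv).nonempty
  set D := M⁻¹.trace - (M + δU • 1)⁻¹.trace
  set s := v ⬝ᵥ (M + δU • 1)⁻¹ *ᵥ v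
  set q := v ⬝ᵥ ((M + δU • 1)⁻¹ * (M + δU • 1)⁻¹) *ᵥ v
  have hD : 0 < D := sub_pos.2 (hu.trace_inv_add_smul_one_lt hδ)
  have hq : 0 < q := hMδ.dotProduct_mul_self_inv_mulVec_pos hv
  have hslack : t * q / D ≤ 1 - t * s := by
    rw [ge_iff_le, le_div_iff₀ ht] at hUt
    linarith [show t * q / D = q / D * t by ring]
  have hts : t * s < 1 := by linarith [div_pos (mul_pos ht hq) hD]
  have hgain : t / (1 - t * s) * q ≤ D := by
    rw [div_mul_eq_mul_div, div_le_iff₀ (sub_pos.2 hts)]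
    rw [div_le_iff₀ hD] at hslack
    linarith
  rw [trace_inv_sub_smul_vecMulVec hMδ.isUnit v (sub_pos.2 hts).ne']
  exact ⟨by linarith, hMδ.sub_smul_vecMulVec v ht.le hts⟩

/-- Upper Barrier Shift (Lemma 3.3): if `λ_max(A) < u` (i.e. `uI - A ≻ 0`) and
`1/t ≥ U_A(v)`, then adding `t·vvᵀ` and shifting the upper barrier by `δU` does not
increase the upper potential, and no eigenvalue crosses the shifted barrier. -/
theorem upper_barrier_shift {n : ℕ} (A : Matrix (Fin n) (Fin n) ℝ) (hA : A.IsSymm)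
    (u δU : ℝ) (hδ : 0 < δU)
    (hu : (u • (1 : Matrix (Fin n) (Fin n) ℝ) - A).PosDef)
    (v : Fin n → ℝ) (t : ℝ) (ht : 0 < t)
    (hUt : 1 / t ≥
      (v ⬝ᵥ (((u + δU) • (1 : Matrix (Fin n) (Fin n) ℝ) - A)⁻¹ *
          ((u + δU) • (1 : Matrix (Fin n) (Fin n) ℝ) - A)⁻¹).mulVec v) /
        (upperPotential u A - upperPotential (u + δU) A)
      + v ⬝ᵥ (((u + δU) • (1 : Matrix (Fin n) (Fin n) ℝ) - A)⁻¹).mulVec v) :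
    upperPotential (u + δU) (A + t • vecMulVec v v) ≤ upperPotential u A ∧
    ((u + δU) • (1 : Matrix (Fin n) (Fin n) ℝ) - (A + t • vecMulVec v v)).PosDef :=
  upper_barrier_shift_general A u δU hδ hu v t ht hUt
end

section
/- Let A be a real symmetric n×n matrix with λ_min(A) > l, let δ_L > 0 with Φ_l(A) ≤ 1/δ_L, and let v ∈ R^n. Define L_A(v) = v^T(A - (l+δ_L)I)^{-2} v / (Φ_{l+δ_L}(A) - Φ_l(A)) - v^T(A - (l+δ_L)I)^{-1} v. If t > 0 satisfies 0 < 1/t ≤ L_A(v), then Φ_{l+δ_L}(A + t v v^T) ≤ Φ_l(A) and λ_min(A + t v v^T) > l + δ_L. -/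
/-!
Put `M = A - (l + δL)I`. Every eigenvalue `x` of `A - lI` satisfies `1/x ≤ Φ_l(A) ≤ 1/δL`, so
`M ⪰ 0`; and `M` is invertible because `L_A(v) > 0`. Hence
`M + t vvᵀ ≻ 0`, and by Sherman–Morrison
`Φ_{l+δL}(A + t vvᵀ) = Φ_{l+δL}(A) - t vᵀM⁻²v / (1 + t vᵀM⁻¹v)`;
the hypothesis `1/t ≤ L_A(v)` says precisely that this decrease is at least
`Φ_{l+δL}(A) - Φ_l(A)`.
-/

open Matrix

/-- The lower potential `Φ_l(A) = Tr((A - lI)⁻¹)`. -/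
noncomputable def lowerPotential {n : ℕ} (l : ℝ) (A : Matrix (Fin n) (Fin n) ℝ) : ℝ :=
  ((A - l • (1 : Matrix (Fin n) (Fin n) ℝ))⁻¹).trace

namespace Matrix

variable {n : Type*} [Fintype n] [DecidableEq n]

theorem inv_add_vecMulVec {K : Type*} [Field K] {M : Matrix n n K} (hM : IsUnit M)
    (u w : n → K) (h : 1 + w ⬝ᵥ M⁻¹ *ᵥ u ≠ 0) :
    (M + vecMulVec u w)⁻¹ =
      M⁻¹ - (1 + w ⬝ᵥ M⁻¹ *ᵥ u)⁻¹ • vecMulVec (M⁻¹ *ᵥ u) (w ᵥ* M⁻¹) := by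
  have hMM : M * M⁻¹ = 1 := mul_nonsing_inv M ((isUnit_iff_isUnit_det M).mp hM)
  apply inv_eq_right_inv
  rw [add_mul, mul_sub, mul_sub, hMM, Matrix.mul_smul, Matrix.mul_smul, mul_vecMulVec,
    mul_vecMulVec, mulVec_mulVec, hMM, one_mulVec, vecMulVec_mul, vecMulVec_mulVec,
    op_smul_eq_smul, smul_vecMulVec]
  have hc : 1 = (1 + w ⬝ᵥ M⁻¹ *ᵥ u)⁻¹ * (1 + w ⬝ᵥ M⁻¹ *ᵥ u) := (inv_mul_cancel₀ h).symm
  linear_combination (norm := module) hc • vecMulVec u (w ᵥ* M⁻¹)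

theorem trace_inv_add_vecMulVec {K : Type*} [Field K] {M : Matrix n n K} (hM : IsUnit M)
    (u w : n → K) (h : 1 + w ⬝ᵥ M⁻¹ *ᵥ u ≠ 0) :
    (M + vecMulVec u w)⁻¹.trace =
      M⁻¹.trace - w ⬝ᵥ (M⁻¹ * M⁻¹) *ᵥ u / (1 + w ⬝ᵥ M⁻¹ *ᵥ u) := by
  rw [inv_add_vecMulVec hM u w h, trace_sub, trace_smul, trace_vecMulVec,
    dotProduct_comm (M⁻¹ *ᵥ u), ← dotProduct_mulVec, mulVec_mulVec, smul_eq_mul, inv_mul_eq_div]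

theorem PosSemidef.le_trace_of_mem_spectrum {Q : Matrix n n ℝ} (hQ : Q.PosSemidef) {x : ℝ}
    (hx : x ∈ spectrum ℝ Q) : x ≤ Q.trace := by
  rw [hQ.1.spectrum_real_eq_range_eigenvalues] at hx
  obtain ⟨i, rfl⟩ := hx
  rw [hQ.1.trace_eq_sum_eigenvalues]
  exact Finset.single_le_sum (fun j _ => hQ.eigenvalues_nonneg j) (Finset.mem_univ i)

theorem PosDef.posSemidef_sub_smul_one_of_trace_inv_le {P : Matrix n n ℝ} (hP : P.PosDef)
    {δ : ℝ} (hδ : 0 < δ) (h : P⁻¹.trace ≤ δ⁻¹) : (P - δ • 1).PosSemidef := by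
  refine posSemidef_iff_isHermitian_and_spectrum_nonneg.mpr
    ⟨hP.1.sub (isHermitian_one.smul (IsSelfAdjoint.all δ)), ?_⟩
  rw [← Algebra.algebraMap_eq_smul_one, ← spectrum.sub_singleton_eq]
  rintro _ ⟨x, hx, y, hy, rfl⟩
  rw [Set.mem_singleton_iff.mp hy]
  have hx_pos : 0 < x := by
    rw [hP.1.spectrum_real_eq_range_eigenvalues] at hx
    obtain ⟨i, rfl⟩ := hx
    exact hP.eigenvalues_pos i
  have hx_inv : x⁻¹ ∈ spectrum ℝ P⁻¹ := by
    rw [← hP.isUnit.unit_spec] at hx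
    simpa using spectrum.inv₀_mem_inv_iff.mpr hx
  have : x⁻¹ ≤ δ⁻¹ := (hP.inv.posSemidef.le_trace_of_mem_spectrum hx_inv).trans h
  simpa using (inv_le_inv₀ hx_pos hδ).mp this

end Matrix

theorem le_mul_div_one_add_mul_of_inv_le_div_sub {t s q d : ℝ} (ht : 0 < t) (hs : 0 ≤ s)
    (hq : 0 ≤ q) (h : 1 / t ≤ q / d - s) : d ≤ t * q / (1 + t * s) := by
  rcases le_or_gt d 0 with hd | hd
  · exact hd.trans (by positivity)
  have h' : (1 + t * s) / t ≤ q / d := by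
    rw [add_div, mul_div_cancel_left₀ s ht.ne']
    linarith
  rw [div_le_div_iff₀ ht hd] at h'
  rw [le_div_iff₀ (by positivity)]
  linarith

theorem lower_barrier_shift_general {n : ℕ} (A : Matrix (Fin n) (Fin n) ℝ)
    (l δL : ℝ) (hδ : 0 < δL)
    (hl : (A - l • (1 : Matrix (Fin n) (Fin n) ℝ)).PosDef)
    (hΦ : lowerPotential l A ≤ 1 / δL)
    (v : Fin n → ℝ) (t : ℝ) (ht : 0 < t)
    (hLt : 1 / t ≤
      (v ⬝ᵥ ((A - (l + δL) • (1 : Matrix (Fin n) (Fin n) ℝ))⁻¹ *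
          (A - (l + δL) • (1 : Matrix (Fin n) (Fin n) ℝ))⁻¹).mulVec v) /
        (lowerPotential (l + δL) A - lowerPotential l A)
      - v ⬝ᵥ ((A - (l + δL) • (1 : Matrix (Fin n) (Fin n) ℝ))⁻¹).mulVec v) :
    lowerPotential (l + δL) (A + t • vecMulVec v v) ≤ lowerPotential l A ∧
    ((A + t • vecMulVec v v) - (l + δL) • (1 : Matrix (Fin n) (Fin n) ℝ)).PosDef := by
  set M := A - (l + δL) • (1 : Matrix (Fin n) (Fin n) ℝ)
  have hM_psd : M.PosSemidef := by
    have := hl.posSemidef_sub_smul_one_of_trace_inv_le hδ (by rw [← one_div δL]; exact hΦ)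
    rwa [sub_sub, ← add_smul] at this
  -- A singular `M` has junk inverse `0`, which would make the right side of `hLt` vanish.
  have hM : M.PosDef := hM_psd.posDef_iff_isUnit.mpr <| by
    by_contra hM_sing
    rw [nonsing_inv_eq_ringInverse, Ring.inverse_non_unit _ hM_sing] at hLt
    simp only [Matrix.mul_zero, zero_mulVec, dotProduct_zero, zero_div, sub_zero] at hLt
    linarith [one_div_pos.mpr ht]
  have h_update : A + t • vecMulVec v v - (l + δL) • 1 = M + t • vecMulVec v v :=
    add_sub_right_comm _ _ _
  have hs : 0 ≤ v ⬝ᵥ M⁻¹ *ᵥ v := by simpa using hM.inv.posSemidef.dotProduct_mulVec_nonneg v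
  have hq : 0 ≤ v ⬝ᵥ (M⁻¹ * M⁻¹) *ᵥ v := by
    have := posSemidef_conjTranspose_mul_self M⁻¹
    rw [hM.inv.1.eq] at this
    simpa using this.dotProduct_mulVec_nonneg v
  have h_denom : 1 + v ⬝ᵥ M⁻¹ *ᵥ (t • v) ≠ 0 := by
    rw [mulVec_smul, dotProduct_smul, smul_eq_mul]; positivity
  refine ⟨?_, h_update ▸ hM.add_posSemidef ((posSemidef_vecMulVec_self_star v).smul ht.le)⟩
  rw [lowerPotential, h_update, ← smul_vecMulVec, trace_inv_add_vecMulVec hM.isUnit _ _ h_denom]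
  simp only [mulVec_smul, dotProduct_smul, smul_eq_mul]
  exact sub_le_comm.mp (le_mul_div_one_add_mul_of_inv_le_div_sub ht hs hq hLt)

/-- Lower Barrier Shift (Lemma 3.4): if `λ_min(A) > l` (i.e. `A - lI ≻ 0`),
`Φ_l(A) ≤ 1/δL`, and `0 < 1/t ≤ L_A(v)`, then adding `t·vvᵀ` and shifting the lower
barrier by `δL` does not increase the lower potential, and the smallest eigenvalue
stays above the shifted barrier. -/
theorem lower_barrier_shift {n : ℕ} (A : Matrix (Fin n) (Fin n) ℝ) (hA : A.IsSymm)
    (l δL : ℝ) (hδ : 0 < δL)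
    (hl : (A - l • (1 : Matrix (Fin n) (Fin n) ℝ)).PosDef)
    (hΦ : lowerPotential l A ≤ 1 / δL)
    (v : Fin n → ℝ) (t : ℝ) (ht : 0 < t)
    (hLt : 1 / t ≤
      (v ⬝ᵥ ((A - (l + δL) • (1 : Matrix (Fin n) (Fin n) ℝ))⁻¹ *
          (A - (l + δL) • (1 : Matrix (Fin n) (Fin n) ℝ))⁻¹).mulVec v) /
        (lowerPotential (l + δL) A - lowerPotential l A)
      - v ⬝ᵥ ((A - (l + δL) • (1 : Matrix (Fin n) (Fin n) ℝ))⁻¹).mulVec v) :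
    lowerPotential (l + δL) (A + t • vecMulVec v v) ≤ lowerPotential l A ∧
    ((A + t • vecMulVec v v) - (l + δL) • (1 : Matrix (Fin n) (Fin n) ℝ)).PosDef :=
  lower_barrier_shift_general A l δL hδ hl hΦ v t ht hLt
end

section
/- Let A be a real symmetric n×n matrix with λ_max(A) < u and δ_U > 0, and let v_1,…,v_m satisfy Σ_i v_i v_i^T = I. Then Σ_i U_A(v_i) ≤ 1/δ_U + Φ^u(A), where U_A(v) = v^T((u+δ_U)I - A)^{-2} v / (Φ^u(A) - Φ^{u+δ_U}(A)) + v^T((u+δ_U)I - A)^{-1} v. -/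
open Matrix

/-- The quantity `U_A(v)` from the Upper Barrier Shift lemma. -/
noncomputable def upperU {n : ℕ} (u δU : ℝ) (A : Matrix (Fin n) (Fin n) ℝ)
    (v : Fin n → ℝ) : ℝ :=
  (v ⬝ᵥ (((u + δU) • (1 : Matrix (Fin n) (Fin n) ℝ) - A)⁻¹ *
      ((u + δU) • (1 : Matrix (Fin n) (Fin n) ℝ) - A)⁻¹).mulVec v) /
    (upperPotential u A - upperPotential (u + δU) A)
  + v ⬝ᵥ (((u + δU) • (1 : Matrix (Fin n) (Fin n) ℝ) - A)⁻¹).mulVec v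

/-!
Since `∑ vᵢ vᵢᵀ = I`, summing the quadratic forms `vᵢᵀ X vᵢ` gives `tr X`. With `N = uI - A` and
`M = N + δI` the claim therefore reads `tr M⁻² / (tr N⁻¹ - tr M⁻¹) + tr M⁻¹ ≤ 1/δ + tr N⁻¹`.
The resolvent identity `N⁻¹ - M⁻¹ = δ N⁻¹ M⁻¹` shows that `tr N⁻¹ - tr M⁻¹ - δ tr M⁻²` equals
`δ² tr (M⁻¹ N⁻¹ M⁻¹) ≥ 0`, a congruence of the positive definite `N⁻¹`. Hence the ratio is at most
`1/δ` and `tr M⁻¹ ≤ tr N⁻¹`.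
-/

namespace Matrix

variable {n : Type*} [Fintype n]

theorem sum_dotProduct_mulVec_eq_trace {R ι : Type*} [CommSemiring R] [Fintype ι]
    [DecidableEq n] (v : ι → n → R) (hv : ∑ i, vecMulVec (v i) (v i) = 1) (X : Matrix n n R) :
    ∑ i, v i ⬝ᵥ X *ᵥ v i = X.trace := by
  have hterm (w : n → R) : w ⬝ᵥ X *ᵥ w = (X * vecMulVec w w).trace := by
    rw [mul_vecMulVec, trace_vecMulVec, dotProduct_comm]
  simp_rw [hterm, ← trace_sum, ← Matrix.mul_sum, hv, Matrix.mul_one]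

namespace PosDef

variable [DecidableEq n] {N : Matrix n n ℝ}

omit [Fintype n] in
theorem add_smul_one_s7 (hN : N.PosDef) {c : ℝ} (hc : 0 ≤ c) : (N + c • 1).PosDef :=
  hN.add_posSemidef (PosSemidef.one.smul hc)

theorem inv_sub_inv_add_smul_one (hN : N.PosDef) {c : ℝ} (hc : 0 ≤ c) :
    N⁻¹ - (N + c • 1)⁻¹ = c • (N⁻¹ * (N + c • 1)⁻¹) := by
  rw [inv_sub_inv (iff_of_true hN.isUnit (hN.add_smul_one_s7 hc).isUnit), add_sub_cancel_left,
    Matrix.mul_smul, Matrix.mul_one, Matrix.smul_mul]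

theorem mul_trace_inv_mul_inv_le (hN : N.PosDef) {c : ℝ} (hc : 0 ≤ c) :
    c * ((N + c • 1)⁻¹ * (N + c • 1)⁻¹).trace ≤ N⁻¹.trace - (N + c • 1)⁻¹.trace := by
  set R := (N + c • 1)⁻¹
  have hR : Rᴴ = R := (hN.add_smul_one_s7 hc).inv.isHermitian
  have hcongr : 0 ≤ (Rᴴ * N⁻¹ * R).trace :=
    (hN.inv.posSemidef.conjTranspose_mul_mul_same R).trace_nonneg
  have hres : N⁻¹ - R = c • (N⁻¹ * R) := hN.inv_sub_inv_add_smul_one hc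
  have hdiff : N⁻¹.trace - R.trace - c * (R * R).trace = c ^ 2 * (Rᴴ * N⁻¹ * R).trace :=
    calc N⁻¹.trace - R.trace - c * (R * R).trace
        = c * (N⁻¹ * R).trace - c * (R * R).trace := by
          rw [← trace_sub, hres, trace_smul, smul_eq_mul]
      _ = c * ((N⁻¹ - R) * R).trace := by rw [Matrix.sub_mul, trace_sub, mul_sub]
      _ = c ^ 2 * (Rᴴ * N⁻¹ * R).trace := by
          rw [hres, Matrix.smul_mul, trace_smul, smul_eq_mul, hR, trace_mul_cycle N⁻¹]
          ring
  linarith [mul_nonneg (sq_nonneg c) hcongr]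

end PosDef

end Matrix

theorem sum_upperU_le_general {n m : ℕ} (A : Matrix (Fin n) (Fin n) ℝ)
    (u δU : ℝ) (hδ : 0 < δU)
    (hu : (u • (1 : Matrix (Fin n) (Fin n) ℝ) - A).PosDef)
    (v : Fin m → (Fin n → ℝ))
    (hdecomp : ∑ i, vecMulVec (v i) (v i) = (1 : Matrix (Fin n) (Fin n) ℝ)) :
    ∑ i, upperU u δU A (v i) ≤ 1 / δU + upperPotential u A := by
  simp only [upperU, upperPotential]
  rw [Finset.sum_add_distrib, ← Finset.sum_div, sum_dotProduct_mulVec_eq_trace v hdecomp,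
    sum_dotProduct_mulVec_eq_trace v hdecomp]
  set N := u • (1 : Matrix (Fin n) (Fin n) ℝ) - A
  set M := (u + δU) • (1 : Matrix (Fin n) (Fin n) ℝ) - A
  have hMN : M = N + δU • 1 := by simp only [M, N, add_smul]; abel
  have hM : M.PosDef := hMN ▸ hu.add_smul_one_s7 hδ.le
  have hT : 0 ≤ (M⁻¹ * M⁻¹).trace := by
    simpa only [hM.inv.isHermitian.eq] using (posSemidef_conjTranspose_mul_self M⁻¹).trace_nonneg
  have hkey : δU * (M⁻¹ * M⁻¹).trace ≤ N⁻¹.trace - M⁻¹.trace :=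
    hMN ▸ hu.mul_trace_inv_mul_inv_le hδ.le
  have hgap : 0 ≤ N⁻¹.trace - M⁻¹.trace := (mul_nonneg hδ.le hT).trans hkey
  have hratio : (M⁻¹ * M⁻¹).trace / (N⁻¹.trace - M⁻¹.trace) ≤ 1 / δU :=
    div_le_of_le_mul₀ hgap (by positivity)
      (by rw [one_div_mul_eq_div, le_div_iff₀ hδ]; linarith)
  linarith

/-- Bound on the total of `U_A(vᵢ)` over a decomposition of the identity:
`∑ᵢ U_A(vᵢ) ≤ 1/δU + Φ^u(A)`. -/
theorem sum_upperU_le {n m : ℕ} (A : Matrix (Fin n) (Fin n) ℝ) (hA : A.IsSymm)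
    (u δU : ℝ) (hδ : 0 < δU)
    (hu : (u • (1 : Matrix (Fin n) (Fin n) ℝ) - A).PosDef)
    (v : Fin m → (Fin n → ℝ))
    (hdecomp : ∑ i, vecMulVec (v i) (v i) = (1 : Matrix (Fin n) (Fin n) ℝ)) :
    ∑ i, upperU u δU A (v i) ≤ 1 / δU + upperPotential u A :=
  sum_upperU_le_general A u δU hδ hu v hdecomp
end

section
/- Let H = (V,E,w) be a weighted graph on n vertices that (1+ε)-approximates the complete graph K_n, meaning L_{K_n} ⪯ L_H ⪯ (1+ε) L_{K_n}. Then for every pair of disjoint vertex sets S and T, |w(S,T) − (1+ε/2)|S||T|| ≤ (nε/2)·√(|S||T|). -/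
/-- The Laplacian quadratic form of a weighted graph on `Fin n`. -/
noncomputable def lapForm {n : ℕ} (w : Fin n → Fin n → ℝ) (x : Fin n → ℝ) : ℝ :=
  (1 / 2) * ∑ i, ∑ j, w i j * (x i - x j) ^ 2

/-!
The form `B = L_H - (1 + ε/2) L_{K_n}` satisfies `|B(z,z)| ≤ (ε/2) L_{K_n}(z,z)` by the Loewner
sandwich, and a symmetric form dominated in absolute value on the diagonal by `Q` obeys
`B(x,y)² ≤ Q(x,x) Q(y,y)`. At the indicators of disjoint `S` and `T` we have
`B(1_S, 1_T) = -w(S,T) + (1 + ε/2)|S||T|`, while `L_{K_n}(1_S, 1_S) = |S|(n - |S|) ≤ n|S|`.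
-/

namespace LinearMap.BilinForm.IsSymm

variable {K M : Type*} [Field K] [LinearOrder K] [IsStrictOrderedRing K]
  [AddCommGroup M] [Module K M]

theorem apply_sq_le_of_abs_apply_self_le {B Q : LinearMap.BilinForm K M} (hB : B.IsSymm)
    (hBQ : ∀ z, |B z z| ≤ Q z z) (x y : M) : B x y ^ 2 ≤ Q x x * Q y y := by
  -- `4 t B(x,y) = B(tx+y, tx+y) - B(tx-y, tx-y) ≤ Q(tx+y, tx+y) + Q(tx-y, tx-y)`
  have hquad : ∀ t : K, 0 ≤ (2 * Q x x) * (t * t) + (-4 * B x y) * t + 2 * Q y y := by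
    intro t
    have hplus := (abs_le.1 (hBQ (t • x + y))).2
    have hminus := (abs_le.1 (hBQ (t • x - y))).1
    simp only [map_add, map_sub, map_smul, LinearMap.add_apply, LinearMap.sub_apply,
      LinearMap.smul_apply, smul_eq_mul, ← hB.eq x y] at hplus hminus
    linear_combination hplus + hminus
  have hdisc := discrim_le_zero hquad
  rw [discrim] at hdisc
  linear_combination hdisc / 16

theorem sq_apply_sub_le_of_le_of_le {B C : LinearMap.BilinForm K M} (hB : B.IsSymm)
    (hC : C.IsSymm) {ε : K} (happrox : ∀ z, C z z ≤ B z z ∧ B z z ≤ (1 + ε) * C z z) (x y : M) :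
    (B x y - (1 + ε / 2) * C x y) ^ 2 ≤ ε / 2 * C x x * (ε / 2 * C y y) := by
  have hdev : ∀ z, |(B - (1 + ε / 2) • C) z z| ≤ ((ε / 2) • C) z z := by
    intro z
    obtain ⟨hlow, hup⟩ := happrox z
    simp only [LinearMap.sub_apply, LinearMap.smul_apply, smul_eq_mul]
    rw [abs_le]
    constructor <;> linarith
  simpa using (hB.sub (hC.smul _)).apply_sq_le_of_abs_apply_self_le hdev x y

end LinearMap.BilinForm.IsSymm

section Laplacian

variable {n : ℕ}

noncomputable def lapBilin (w : Fin n → Fin n → ℝ) : LinearMap.BilinForm ℝ (Fin n → ℝ) :=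
  LinearMap.mk₂ ℝ (fun x y => (1 / 2) * ∑ i, ∑ j, w i j * ((x i - x j) * (y i - y j)))
    (fun x x' y => by
      simp only [Pi.add_apply, Finset.mul_sum, ← Finset.sum_add_distrib]
      exact Finset.sum_congr rfl fun i _ => Finset.sum_congr rfl fun j _ => by ring)
    (fun c x y => by
      simp only [Pi.smul_apply, smul_eq_mul, Finset.mul_sum]
      exact Finset.sum_congr rfl fun i _ => Finset.sum_congr rfl fun j _ => by ring)
    (fun x y y' => by
      simp only [Pi.add_apply, Finset.mul_sum, ← Finset.sum_add_distrib]
      exact Finset.sum_congr rfl fun i _ => Finset.sum_congr rfl fun j _ => by ring)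
    (fun c x y => by
      simp only [Pi.smul_apply, smul_eq_mul, Finset.mul_sum]
      exact Finset.sum_congr rfl fun i _ => Finset.sum_congr rfl fun j _ => by ring)

theorem lapBilin_apply (w : Fin n → Fin n → ℝ) (x y : Fin n → ℝ) :
    lapBilin w x y = (1 / 2) * ∑ i, ∑ j, w i j * ((x i - x j) * (y i - y j)) :=
  rfl

theorem lapBilin_apply_self (w : Fin n → Fin n → ℝ) (x : Fin n → ℝ) :
    lapBilin w x x = lapForm w x := by
  simp only [lapBilin_apply, lapForm, sq]

theorem isSymm_lapBilin (w : Fin n → Fin n → ℝ) : (lapBilin w).IsSymm :=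
  ⟨fun x y => by simp only [lapBilin_apply, mul_comm (x _ - x _)]⟩

theorem lapBilin_apply_const (w : Fin n → Fin n → ℝ) (x : Fin n → ℝ) (c : ℝ) :
    lapBilin w x (fun _ => c) = 0 := by
  simp [lapBilin_apply]

theorem sum_sum_mul_indicator_mul_indicator (w : Fin n → Fin n → ℝ) (S T : Finset (Fin n)) :
    ∑ i, ∑ j, w i j * ((S : Set (Fin n)).indicator 1 i * (T : Set (Fin n)).indicator 1 j) =
      ∑ i ∈ S, ∑ j ∈ T, w i j := by
  simp [Set.indicator_apply, Finset.sum_ite_mem]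

theorem lapBilin_indicator_indicator {w : Fin n → Fin n → ℝ} (hw : ∀ i j, w i j = w j i)
    {S T : Finset (Fin n)} (hST : Disjoint S T) :
    lapBilin w ((S : Set (Fin n)).indicator 1) ((T : Set (Fin n)).indicator 1) =
      -∑ i ∈ S, ∑ j ∈ T, w i j := by
  rw [← sum_sum_mul_indicator_mul_indicator]
  set x : Fin n → ℝ := (S : Set (Fin n)).indicator 1
  set y : Fin n → ℝ := (T : Set (Fin n)).indicator 1
  have hxy : ∀ i, x i * y i = 0 := by
    intro i
    by_cases hi : i ∈ S
    · simp [x, y, hi, Finset.disjoint_left.1 hST hi]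
    · simp [x, hi]
  have hterm : ∀ i j, w i j * ((x i - x j) * (y i - y j)) =
      -(w i j * (x i * y j)) - w j i * (x j * y i) := by
    intro i j
    rw [hw j i]
    linear_combination w i j * (hxy i + hxy j)
  have hswap : ∑ i, ∑ j, w j i * (x j * y i) = ∑ i, ∑ j, w i j * (x i * y j) :=
    Finset.sum_comm
  simp only [lapBilin_apply, hterm, Finset.sum_sub_distrib, Finset.sum_neg_distrib, hswap]
  ring

def completeWeight (n : ℕ) (i j : Fin n) : ℝ := if i = j then 0 else 1

theorem completeWeight_comm (i j : Fin n) : completeWeight n i j = completeWeight n j i := by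
  simp only [completeWeight, eq_comm]

theorem sum_sum_completeWeight {S T : Finset (Fin n)} (hST : Disjoint S T) :
    ∑ i ∈ S, ∑ j ∈ T, completeWeight n i j = S.card * T.card := by
  have hne : ∀ i ∈ S, ∀ j ∈ T, completeWeight n i j = 1 := by
    rintro i hi j hj
    exact if_neg <| by rintro rfl; exact Finset.disjoint_left.1 hST hi hj
  rw [Finset.sum_congr rfl fun i hi => Finset.sum_congr rfl (hne i hi)]
  simp

theorem lapForm_completeWeight_indicator (S : Finset (Fin n)) :
    lapForm (completeWeight n) ((S : Set (Fin n)).indicator 1) = S.card * Sᶜ.card := by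
  -- `1_S = 1 - 1_{Sᶜ}` and constants lie in the kernel of every Laplacian.
  have hsplit : ((S : Set (Fin n)).indicator 1 : Fin n → ℝ) =
      (fun _ => 1) - ((Sᶜ : Finset (Fin n)) : Set (Fin n)).indicator 1 := by
    rw [Finset.coe_compl, Set.indicator_compl]
    exact (sub_sub_cancel _ _).symm
  rw [← lapBilin_apply_self]
  nth_rw 2 [hsplit]
  rw [map_sub, lapBilin_apply_const,
    lapBilin_indicator_indicator completeWeight_comm disjoint_compl_right,
    sum_sum_completeWeight disjoint_compl_right]
  ring

end Laplacian

theorem expander_mixing_general {n : ℕ} (ε : ℝ)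
    (w : Fin n → Fin n → ℝ)
    (hsymm : ∀ i j, w i j = w j i)
    (happrox : ∀ x : Fin n → ℝ,
      lapForm (fun i j => if i = j then (0 : ℝ) else 1) x ≤ lapForm w x ∧
      lapForm w x ≤ (1 + ε) * lapForm (fun i j => if i = j then (0 : ℝ) else 1) x)
    (S T : Finset (Fin n)) (hST : Disjoint S T) :
    |(∑ i ∈ S, ∑ j ∈ T, w i j) - (1 + ε / 2) * S.card * T.card| ≤
      (n : ℝ) * (ε / 2) * Real.sqrt (S.card * T.card) := by
  rcases S.eq_empty_or_nonempty with rfl | hS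
  · simp
  rcases T.eq_empty_or_nonempty with rfl | hT
  · simp
  have hK : ∀ z, lapForm (completeWeight n) z ≤ lapForm w z ∧
      lapForm w z ≤ (1 + ε) * lapForm (completeWeight n) z := happrox
  have hmix := (isSymm_lapBilin w).sq_apply_sub_le_of_le_of_le (isSymm_lapBilin _)
    (fun z => by simpa only [lapBilin_apply_self] using hK z)
    ((S : Set (Fin n)).indicator 1) ((T : Set (Fin n)).indicator 1)
  rw [lapBilin_indicator_indicator hsymm hST,
    lapBilin_indicator_indicator completeWeight_comm hST, sum_sum_completeWeight hST,
    lapBilin_apply_self, lapBilin_apply_self, lapForm_completeWeight_indicator, lapForm_completeWeight_indicator] at hmix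
  have hSc : (0 : ℝ) < Sᶜ.card := by
    exact_mod_cast (hT.mono (Finset.subset_compl_iff_disjoint_left.2 hST)).card_pos
  have hε : 0 ≤ ε := by
    have hsandwich := hK ((S : Set (Fin n)).indicator 1)
    rw [lapForm_completeWeight_indicator] at hsandwich
    have hpos : (0 : ℝ) < S.card * Sᶜ.card := mul_pos (by exact_mod_cast hS.card_pos) hSc
    nlinarith [hsandwich.1, hsandwich.2]
  have hcompl : (Sᶜ.card : ℝ) * Tᶜ.card ≤ n * n := by
    have h := fun U : Finset (Fin n) => U.card_le_univ.trans_eq (Fintype.card_fin n)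
    exact_mod_cast Nat.mul_le_mul (h Sᶜ) (h Tᶜ)
  refine abs_le_of_sq_le_sq ?_ (by positivity)
  calc _ = (-∑ i ∈ S, ∑ j ∈ T, w i j - (1 + ε / 2) * -(S.card * T.card : ℝ)) ^ 2 := by ring
    _ ≤ ε / 2 * (S.card * Sᶜ.card) * (ε / 2 * (T.card * Tᶜ.card)) := hmix
    _ = (ε / 2) ^ 2 * (S.card * T.card) * (Sᶜ.card * Tᶜ.card) := by ring
    _ ≤ (ε / 2) ^ 2 * (S.card * T.card) * (n * n) := by gcongr
    _ = _ := by rw [mul_pow, mul_pow, Real.sq_sqrt (by positivity)]; ring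

/-- Expander Mixing (Lemma 4.1): if `H` `(1+ε)`-approximates the complete graph `Kₙ`,
then for all disjoint vertex sets `S, T`,
`|w(S,T) - (1+ε/2)|S||T|| ≤ (nε/2)·√(|S||T|)`. -/
theorem expander_mixing {n : ℕ} (ε : ℝ)
    (w : Fin n → Fin n → ℝ)
    (hsymm : ∀ i j, w i j = w j i)
    (hnonneg : ∀ i j, 0 ≤ w i j)
    (hdiag : ∀ i, w i i = 0)
    (happrox : ∀ x : Fin n → ℝ,
      lapForm (fun i j => if i = j then (0 : ℝ) else 1) x ≤ lapForm w x ∧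
      lapForm w x ≤ (1 + ε) * lapForm (fun i j => if i = j then (0 : ℝ) else 1) x)
    (S T : Finset (Fin n)) (hST : Disjoint S T) :
    |(∑ i ∈ S, ∑ j ∈ T, w i j) - (1 + ε / 2) * S.card * T.card| ≤
      (n : ℝ) * (ε / 2) * Real.sqrt (S.card * T.card) :=
  expander_mixing_general ε w hsymm happrox S T hST
end

section
/- Let G be the complete graph on n vertices and H = (V,E,w) a weighted graph containing a vertex of degree d, such that x^T L_G x ≤ x^T L_H x ≤ κ · x^T L_G x for all x. Then κ ≥ 1 + 2/√d − O(√d/n). -/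
open Finset

theorem lapForm_complete {n : ℕ} (x : Fin n → ℝ) :
    lapForm (fun i j => if i = j then (0 : ℝ) else 1) x = n * ∑ i, x i ^ 2 - (∑ i, x i) ^ 2 := by
  have hdiag (i j : Fin n) :
      (if i = j then (0 : ℝ) else 1) * (x i - x j) ^ 2 = (x i - x j) ^ 2 := by
    split_ifs with h <;> simp [h]
  rw [lapForm]
  simp only [hdiag]
  simp only [sub_sq, sum_add_distrib, sum_sub_distrib, sum_const, card_univ, Fintype.card_fin,
    nsmul_eq_mul, ← mul_sum, ← sum_mul]
  ring

theorem lapForm_eq_of_forall_ne {n : ℕ} {w : Fin n → Fin n → ℝ} (hsymm : ∀ i j, w i j = w j i)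
    {x y : Fin n → ℝ} {v : Fin n} (hoff : ∀ j ≠ v, y j = x j)
    (hv : ∀ j ≠ v, w v j ≠ 0 → (y v - x j) ^ 2 = (x v - x j) ^ 2) :
    lapForm w y = lapForm w x := by
  have hterm (i j : Fin n) : w i j * (y i - y j) ^ 2 = w i j * (x i - x j) ^ 2 := by
    rcases eq_or_ne (w i j) 0 with h0 | h0
    · simp [h0]
    obtain rfl | hi := eq_or_ne i v
    · obtain rfl | hj := eq_or_ne j i
      · simp
      · rw [hoff j hj, hv j hj h0]
    · obtain rfl | hj := eq_or_ne j v
      · rw [hoff i hi, sub_sq_comm, hv i hi (hsymm i j ▸ h0), sub_sq_comm]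
      · rw [hoff i hi, hoff j hj]
  simp only [lapForm, hterm]

section StarVec

variable {ι : Type*} [DecidableEq ι]

def starVec (v : ι) (S : Finset ι) (t b : ℝ) : ι → ℝ :=
  fun j => if j = v then t else if j ∈ S then b else 0

theorem sum_comp_starVec [Fintype ι] {v : ι} {S : Finset ι} (hv : v ∉ S) (t b : ℝ)
    {g : ℝ → ℝ} (hg : g 0 = 0) : ∑ j, g (starVec v S t b j) = g t + #S * g b := by
  have hoff : ∀ j ∈ ({v}ᶜ : Finset ι), g (starVec v S t b j) = if j ∈ S then g b else 0 := by
    intro j hj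
    rw [starVec, if_neg (by simpa using hj), apply_ite g, hg]
  rw [Fintype.sum_eq_add_sum_compl v, sum_congr rfl hoff, sum_ite_mem,
    inter_eq_right.2 (subset_compl_singleton.2 hv), sum_const, nsmul_eq_mul, starVec, if_pos rfl]

end StarVec

theorem lapForm_starVec_reflect {n : ℕ} {w : Fin n → Fin n → ℝ} (hsymm : ∀ i j, w i j = w j i)
    {v : Fin n} {S : Finset (Fin n)} (hS : ∀ j ≠ v, w v j ≠ 0 → j ∈ S) (t b : ℝ) :
    lapForm w (starVec v S (2 * b - t) b) = lapForm w (starVec v S t b) := by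
  refine lapForm_eq_of_forall_ne (v := v) hsymm (fun j hj => by simp [starVec, hj]) fun j hj hw => ?_
  simp only [starVec, ↓reduceIte, if_neg hj, if_pos (hS j hj hw)]
  ring

theorem one_add_two_div_sub_le {σ n κ : ℝ} (hσ : 1 ≤ σ) (hn : σ ^ 2 ≤ n)
    (h : n * ((σ + 2) ^ 2 + σ ^ 2) - (σ + 2 + σ ^ 2) ^ 2
      ≤ κ * (n * (σ ^ 2 + σ ^ 2) - (σ - σ ^ 2) ^ 2)) :
    1 + 2 / σ - 16 * σ / n ≤ κ := by
  set D := n * (σ ^ 2 + σ ^ 2) - (σ - σ ^ 2) ^ 2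
  set N := n * ((σ + 2) ^ 2 + σ ^ 2) - (σ + 2 + σ ^ 2) ^ 2
  have hσ0 : 0 < σ := by linarith
  have hn0 : 0 < n := by nlinarith
  have hDn : n * σ ^ 2 ≤ D := by
    have : (σ - σ ^ 2) ^ 2 ≤ (σ ^ 2) ^ 2 := by nlinarith
    nlinarith
  have hD0 : 0 < D := lt_of_lt_of_le (by positivity) hDn
  have hP : 2 * σ ^ 4 + 8 * σ ^ 3 + 2 * σ ^ 2 + 4 * σ ≤ 16 * σ ^ 4 := by
    have h1 : σ ≤ σ ^ 4 := le_self_pow₀ hσ (by norm_num)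
    have h2 : σ ^ 2 ≤ σ ^ 4 := pow_le_pow_right₀ hσ (by norm_num)
    have h3 : σ ^ 3 ≤ σ ^ 4 := pow_le_pow_right₀ hσ (by norm_num)
    linarith
  have hlow : (1 + 2 / σ - 16 * σ / n) * D ≤ N := by
    have hcoef : 1 + 2 / σ - 16 * σ / n = ((σ + 2) * n - 16 * σ ^ 2) / (σ * n) := by
      field_simp
    rw [hcoef, div_mul_eq_mul_div, div_le_iff₀ (by positivity)]
    -- `σ N = (σ + 2) D + 4nσ − P(σ)` with `P(σ) ≤ 16σ⁴`, while `16σ² D ≥ 16nσ⁴`.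
    calc ((σ + 2) * n - 16 * σ ^ 2) * D
        ≤ n * ((σ + 2) * D + 4 * n * σ - (2 * σ ^ 4 + 8 * σ ^ 3 + 2 * σ ^ 2 + 4 * σ)) := by
          nlinarith [mul_le_mul_of_nonneg_left hDn (by positivity : (0 : ℝ) ≤ 16 * σ ^ 2),
            mul_le_mul_of_nonneg_left hP hn0.le]
      _ = N * (σ * n) := by ring
  exact le_of_mul_le_mul_right (hlow.trans h) hD0

/-- Proposition 4.2: there is a universal constant `C` such that if a weighted graph
`H` on `n` vertices with a vertex of (unweighted) degree `d` `κ`-approximates the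
complete graph, then `κ ≥ 1 + 2/√d - C·√d/n`. -/
theorem lower_bound_complete_approx :
    ∃ C : ℝ, 0 < C ∧
      ∀ (n d : ℕ), 0 < d → 0 < n →
      ∀ (w : Fin n → Fin n → ℝ) (κ : ℝ),
        (∀ i j, w i j = w j i) →
        (∀ i j, 0 ≤ w i j) →
        (∀ i, w i i = 0) →
        (∃ v₀ : Fin n, (Finset.univ.filter fun j => w v₀ j ≠ 0).card = d) →
        (∀ x : Fin n → ℝ,
          lapForm (fun i j => if i = j then (0 : ℝ) else 1) x ≤ lapForm w x ∧
          lapForm w x ≤ κ * lapForm (fun i j => if i = j then (0 : ℝ) else 1) x) →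
        1 + 2 / Real.sqrt d - C * Real.sqrt d / n ≤ κ := by
  refine ⟨16, by norm_num, ?_⟩
  rintro n d hd - w κ hsymm - hdiag ⟨v, hdeg⟩ happrox
  set S := univ.filter fun j => w v j ≠ 0
  set σ := Real.sqrt d
  have hσ2 : σ ^ 2 = d := Real.sq_sqrt d.cast_nonneg
  have hvS : v ∉ S := by simp [S, hdiag]
  have hS : ∀ j ≠ v, w v j ≠ 0 → j ∈ S := fun j _ hw => by simp [S, hw]
  have hsums (t : ℝ) : lapForm (fun i j => if i = j then (0 : ℝ) else 1) (starVec v S t (-1))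
      = n * (t ^ 2 + σ ^ 2) - (t - σ ^ 2) ^ 2 := by
    have hsum := sum_comp_starVec hvS t (-1) (g := id) rfl
    have hsq := sum_comp_starVec hvS t (-1) (g := (· ^ 2)) (zero_pow two_ne_zero)
    simp only [id, hdeg, ← hσ2] at hsum hsq
    rw [lapForm_complete, hsum, hsq]
    ring
  have hdn : σ ^ 2 ≤ n := by
    rw [hσ2, ← hdeg]
    exact_mod_cast (card_le_univ S).trans_eq (Fintype.card_fin n)
  refine one_add_two_div_sub_le (Real.one_le_sqrt.2 (by exact_mod_cast hd)) hdn ?_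
  calc n * ((σ + 2) ^ 2 + σ ^ 2) - (σ + 2 + σ ^ 2) ^ 2
      = lapForm (fun i j => if i = j then (0 : ℝ) else 1) (starVec v S (2 * -1 - σ) (-1)) := by
        rw [hsums]; ring
    _ ≤ lapForm w (starVec v S (2 * -1 - σ) (-1)) := (happrox _).1
    _ = lapForm w (starVec v S σ (-1)) := lapForm_starVec_reflect hsymm hS σ (-1)
    _ ≤ κ * (n * (σ ^ 2 + σ ^ 2) - (σ - σ ^ 2) ^ 2) := hsums σ ▸ (happrox _).2
end
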